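/- arXiv:1804.08920 — 5 statements merged into one kernel-verified Lean document; each statement's English description precedes it below -/
import Mathlib

section
/- The two-variable polynomials p_{m,n} ∈ ℤ[X,Y] defined by p_{0,0}=1, p_{1,0}=X, p_{0,1}=Y, p with negative indices equal to 0, and the recursions X·p_{m,n} = p_{m+1,n} + p_{m-1,n+1} + p_{m,n-1} and Y·p_{m,n} = p_{m,n+1} + p_{m+1,n-1} + p_{m-1,n}, are uniquely determined by these conditions, and satisfy the symmetry p_{m,n}(X,Y) = p_{n,m}(Y,X) for all m,n ∈ ℕ. -/
/-!
The recursions determine `p_{m,n}` by induction on `m + n`, which gives uniqueness, and the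
family `p_{n,m}(Y,X)` satisfies the same conditions, which gives the symmetry. For existence,
let `h_k` be the complete homogeneous symmetric polynomials in three variables whose
elementary symmetric functions are `e₁ = X`, `e₂ = Y`, `e₃ = 1`, so that
`h_{k+1} = X h_k - Y h_{k-1} + h_{k-2}`, and let `h*_k` be the same with `X` and `Y`
exchanged. Then `p_{m,n} = h_m h*_n - h_{m-1} h*_{n-1}` (the character of `V(mω₁) ⊗ V(nω₂)`
minus that of `V((m-1)ω₁) ⊗ V((n-1)ω₂)`), and each recursion for this family is a
combination of one recursion of `h` and one of `h*`.
-/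

open MvPolynomial

/-- The defining conditions of the `sl₃` Chebyshev-like polynomials `p_{m,n} ∈ ℤ[X,Y]`:
`p_{m,n} = 0` for negative indices, `p_{0,0} = 1`, `p_{1,0} = X`, `p_{0,1} = Y`,
and the two Chebyshev-like recursions. -/
def IsSl3Cheb (p : ℤ → ℤ → MvPolynomial (Fin 2) ℤ) : Prop :=
  (∀ m n : ℤ, m < 0 ∨ n < 0 → p m n = 0) ∧
  p 0 0 = 1 ∧ p 1 0 = X 0 ∧ p 0 1 = X 1 ∧
  (∀ m n : ℤ, 0 ≤ m → 0 ≤ n →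
    X 0 * p m n = p (m + 1) n + p (m - 1) (n + 1) + p m (n - 1)) ∧
  (∀ m n : ℤ, 0 ≤ m → 0 ≤ n →
    X 1 * p m n = p m (n + 1) + p (m + 1) (n - 1) + p (m - 1) n)

namespace Sl3Cheb

variable {R : Type*} [CommRing R] (a b : R)

/-- `completeSeq a b (k + 2) = h_k`; the two leading zeros are `h_{-2}` and `h_{-1}`. -/
def completeSeq : ℕ → R
  | 0 => 0
  | 1 => 0
  | 2 => 1
  | k + 3 => a * completeSeq (k + 2) - b * completeSeq (k + 1) + completeSeq k

def complete (k : ℤ) : R := completeSeq a b (k + 2).toNat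

theorem complete_of_neg {k : ℤ} (hk : k < 0) : complete a b k = 0 := by
  obtain h | h : (k + 2).toNat = 0 ∨ (k + 2).toNat = 1 := by omega
  all_goals simp [complete, h, completeSeq]

@[simp] theorem complete_zero : complete a b 0 = 1 := by simp [complete, completeSeq]

theorem complete_succ {k : ℤ} (hk : 0 ≤ k) :
    complete a b (k + 1) =
      a * complete a b k - b * complete a b (k - 1) + complete a b (k - 2) := by
  lift k to ℕ using hk
  simp only [complete]
  rw [show ((k : ℤ) + 1 + 2).toNat = k + 3 by omega, show ((k : ℤ) + 2).toNat = k + 2 by omega,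
    show ((k : ℤ) - 1 + 2).toNat = k + 1 by omega, show ((k : ℤ) - 2 + 2).toNat = k by omega,
    completeSeq]

@[simp] theorem complete_one : complete a b 1 = a := by
  simpa [complete_of_neg] using complete_succ a b le_rfl

def character (m n : ℤ) : R :=
  complete a b m * complete b a n - complete a b (m - 1) * complete b a (n - 1)

theorem character_swap (m n : ℤ) : character b a n m = character a b m n := by
  simp only [character]; ring

theorem character_of_neg {m n : ℤ} (h : m < 0 ∨ n < 0) : character a b m n = 0 := by
  rcases h with h | h
  · simp [character, complete_of_neg a b h, complete_of_neg a b (show m - 1 < 0 by omega)]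
  · simp [character, complete_of_neg b a h, complete_of_neg b a (show n - 1 < 0 by omega)]

theorem mul_character_left {m n : ℤ} (hm : 0 ≤ m) (hn : 0 ≤ n) :
    a * character a b m n =
      character a b (m + 1) n + character a b (m - 1) (n + 1) + character a b m (n - 1) := by
  have hh := complete_succ a b hm
  have hh' := complete_succ b a hn
  simp only [character, add_sub_cancel_right, sub_sub, show (1 : ℤ) + 1 = 2 by norm_num]
  linear_combination -complete b a n * hh - complete a b (m - 1) * hh'

theorem mul_character_right {m n : ℤ} (hm : 0 ≤ m) (hn : 0 ≤ n) :
    b * character a b m n =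
      character a b m (n + 1) + character a b (m + 1) (n - 1) + character a b (m - 1) n := by
  simpa only [character_swap] using mul_character_left b a hn hm

end Sl3Cheb

open Sl3Cheb

theorem isSl3Cheb_character : IsSl3Cheb (character (X 0) (X 1)) :=
  ⟨fun _ _ h => character_of_neg _ _ h, by simp [character, complete_of_neg],
    by simp [character, complete_of_neg], by simp [character, complete_of_neg],
    fun _ _ hm hn => mul_character_left _ _ hm hn, fun _ _ hm hn => mul_character_right _ _ hm hn⟩

namespace IsSl3Cheb

variable {p : ℤ → ℤ → MvPolynomial (Fin 2) ℤ}

theorem eq_zero (hp : IsSl3Cheb p) {m n : ℤ} (h : m < 0 ∨ n < 0) : p m n = 0 :=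
  hp.1 m n h

theorem succ_left (hp : IsSl3Cheb p) {m n : ℤ} (hm : 0 ≤ m) (hn : 0 ≤ n) :
    p (m + 1) n = X 0 * p m n - p (m - 1) (n + 1) - p m (n - 1) := by
  linear_combination -hp.2.2.2.2.1 m n hm hn

theorem zero_succ (hp : IsSl3Cheb p) {n : ℤ} (hn : 0 ≤ n) :
    p 0 (n + 1) = X 1 * p 0 n - p 1 (n - 1) := by
  have h := hp.2.2.2.2.2 0 n le_rfl hn
  rw [zero_add, zero_sub, hp.eq_zero (m := -1) (.inl (by norm_num))] at h
  linear_combination -h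

theorem unique {q : ℤ → ℤ → MvPolynomial (Fin 2) ℤ} (hp : IsSl3Cheb p) (hq : IsSl3Cheb q) :
    p = q := by
  suffices h : ∀ s : ℕ, ∀ m n : ℤ, m + n < s → p m n = q m n from
    funext₂ fun m n => h (m + n + 1).toNat m n (by omega)
  intro s
  induction s with
  | zero =>
    intro m n h
    have hneg : m < 0 ∨ n < 0 := by omega
    rw [hp.eq_zero hneg, hq.eq_zero hneg]
  | succ s ih =>
    intro m n hs
    rcases lt_or_ge m 0 with hm | hm
    · rw [hp.eq_zero (.inl hm), hq.eq_zero (.inl hm)]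
    rcases lt_or_ge n 0 with hn | hn
    · rw [hp.eq_zero (.inr hn), hq.eq_zero (.inr hn)]
    obtain rfl | hm := eq_or_lt_of_le hm
    · obtain rfl | hn := eq_or_lt_of_le hn
      · rw [hp.2.1, hq.2.1]
      obtain ⟨n, rfl⟩ : ∃ k, n = k + 1 := ⟨n - 1, by ring⟩
      rw [hp.zero_succ (by omega), hq.zero_succ (by omega), ih _ _ (by omega), ih _ _ (by omega)]
    obtain ⟨m, rfl⟩ : ∃ k, m = k + 1 := ⟨m - 1, by ring⟩
    rw [hp.succ_left (by omega) hn, hq.succ_left (by omega) hn, ih _ _ (by omega),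
      ih _ _ (by omega), ih _ _ (by omega)]

theorem swap (hp : IsSl3Cheb p) :
    IsSl3Cheb fun m n => rename (Equiv.swap 0 1) (p n m) := by
  obtain ⟨hneg, h00, h10, h01, hX, hY⟩ := hp
  refine ⟨fun m n h => by simp [hneg n m h.symm], by simp [h00], by simp [h01], by simp [h10],
    fun m n hm hn => ?_, fun m n hm hn => ?_⟩
  · simpa using congrArg (rename (Equiv.swap (0 : Fin 2) 1)) (hY n m hn hm)
  · simpa using congrArg (rename (Equiv.swap (0 : Fin 2) 1)) (hX n m hn hm)

end IsSl3Cheb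

/-- The `sl₃` Chebyshev polynomials exist, are uniquely determined by their defining
conditions, and satisfy the symmetry `p_{m,n}(X,Y) = p_{n,m}(Y,X)` for all `m, n ∈ ℕ`. -/
theorem stmt_1 :
    (∃ p, IsSl3Cheb p) ∧
    (∀ p q, IsSl3Cheb p → IsSl3Cheb q → p = q) ∧
    (∀ p, IsSl3Cheb p → ∀ m n : ℕ,
      p (m : ℤ) (n : ℤ) =
        MvPolynomial.rename (Equiv.swap (0 : Fin 2) 1) (p (n : ℤ) (m : ℤ))) :=
  ⟨⟨_, isSl3Cheb_character⟩, fun _ _ hp hq => hp.unique hq,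
    fun _ hp m n => congrFun₂ (hp.unique hp.swap) m n⟩
end

section
/- For the sl_3 Chebyshev polynomials p_{m,n}: the constant term p_{m,n}(0,0) is nonzero if and only if m ≡ n (mod 3) and m ≢ 2 (mod 3); moreover the constant term equals 1 if m ≡ n ≡ 0 (mod 3) and equals −1 if m ≡ n ≡ 1 (mod 3). -/
open MvPolynomial

private def g3 (a b : ℕ) : ℤ :=
  if a = 0 ∧ b = 0 then 1 else if a = 1 ∧ b = 1 then -1 else 0

section aux

variable {p : ℤ → ℤ → MvPolynomial (Fin 2) ℤ} (hp : IsSl3Cheb p)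

include hp

private lemma cz (m n : ℤ) (h : m < 0 ∨ n < 0) : constantCoeff (p m n) = 0 := by
  rw [hp.1 m n h]; simp

private lemma recX (m n : ℤ) (hm : 0 ≤ m) (hn : 0 ≤ n) :
    constantCoeff (p (m+1) n) =
      -(constantCoeff (p (m-1) (n+1))) - constantCoeff (p m (n-1)) := by
  have h := congrArg constantCoeff (hp.2.2.2.2.1 m n hm hn)
  simp only [map_mul, map_add, constantCoeff_X] at h
  linarith

private lemma recY (m n : ℤ) (hm : 0 ≤ m) (hn : 0 ≤ n) :
    constantCoeff (p m (n+1)) =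
      -(constantCoeff (p (m+1) (n-1))) - constantCoeff (p (m-1) n) := by
  have h := congrArg constantCoeff (hp.2.2.2.2.2 m n hm hn)
  simp only [map_mul, map_add, constantCoeff_X] at h
  linarith

private lemma col0 (n : ℕ) : constantCoeff (p 0 (n : ℤ)) = g3 0 (n % 3) := by
  induction n using Nat.strong_induction_on with
  | _ n ih =>
    match n with
    | 0 => simp [hp.2.1, g3]
    | 1 => simp [hp.2.2.2.1, g3]
    | 2 =>
      have h := recY hp 0 1 (by norm_num) (by norm_num)
      have h10 : constantCoeff (p 1 0) = 0 := by simp [hp.2.2.1]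
      have hz1 : constantCoeff (p (-1) 1) = 0 := cz hp _ _ (by norm_num)
      norm_num [h10, hz1] at h
      norm_num [g3, h]
    | (k+3) =>
      have h1 := recY hp 0 ((k:ℤ)+2) (by norm_num) (by positivity)
      have h2 := recX hp 0 ((k:ℤ)+1) (by norm_num) (by positivity)
      have hz1 : constantCoeff (p (0-1) ((k:ℤ)+2)) = 0 := cz hp _ _ (by norm_num)
      have hz2 : constantCoeff (p (0-1) ((k:ℤ)+1+1)) = 0 := cz hp _ _ (by norm_num)
      rw [hz1] at h1
      rw [hz2] at h2
      have e1 : ((k:ℤ)+2+1) = ((k+3 : ℕ) : ℤ) := by push_cast; ring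
      have e2 : ((k:ℤ)+2-1) = (k:ℤ)+1 := by ring
      rw [e1, e2] at h1
      have e3 : ((k:ℤ)+1-1) = (k:ℤ) := by ring
      rw [e3] at h2
      have hkk : (k+3) % 3 = k % 3 := by omega
      rw [h1, h2, hkk, ih k (by omega)]
      ring

private lemma col1 (n : ℕ) : constantCoeff (p 1 (n : ℤ)) = g3 1 (n % 3) := by
  match n with
  | 0 => simp [hp.2.2.1, g3]
  | (k+1) =>
    have h := recX hp 0 ((k:ℤ)+1) (by norm_num) (by positivity)
    have hz1 : constantCoeff (p (0-1) ((k:ℤ)+1+1)) = 0 := cz hp _ _ (by norm_num)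
    rw [hz1] at h
    have hk : ((k:ℤ)+1) = ((k+1 : ℕ) : ℤ) := by push_cast; ring
    have hk2 : ((k:ℤ)+1-1) = (k : ℤ) := by ring
    rw [hk2] at h
    rw [hk, show (0:ℤ)+1 = 1 from by norm_num] at h
    rw [h, col0 hp k]
    have e1 : (k+1) % 3 = (k % 3 + 1) % 3 := by omega
    rw [e1]
    rcases (show k % 3 = 0 ∨ k % 3 = 1 ∨ k % 3 = 2 by omega) with hm | hm | hm <;>
      rw [hm] <;> norm_num [g3]

private lemma key (m n : ℕ) : constantCoeff (p (m : ℤ) (n : ℤ)) = g3 (m % 3) (n % 3) := by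
  induction m using Nat.strong_induction_on generalizing n with
  | _ m ih =>
    match m with
    | 0 => exact col0 hp n
    | 1 => exact col1 hp n
    | (k+2) =>
      have h := recX hp ((k:ℤ)+1) (n : ℤ) (by positivity) (by positivity)
      have hc : ((k:ℤ)+1+1) = ((k+2 : ℕ) : ℤ) := by push_cast; ring
      have hc2 : ((k:ℤ)+1-1) = (k : ℤ) := by ring
      rw [hc, hc2] at h
      have hA : constantCoeff (p (k : ℤ) ((n:ℤ)+1)) = g3 (k % 3) ((n+1) % 3) := by
        have : ((n:ℤ)+1) = ((n+1 : ℕ) : ℤ) := by push_cast; ring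
        rw [this]; exact ih k (by omega) (n+1)
      have hB : constantCoeff (p ((k:ℤ)+1) ((n:ℤ)-1)) =
          (if n = 0 then 0 else g3 ((k+1) % 3) ((n-1) % 3)) := by
        match n with
        | 0 => simpa using cz hp ((k:ℤ)+1) (-1) (by norm_num)
        | (j+1) =>
          have h1 : ((k:ℤ)+1) = ((k+1 : ℕ) : ℤ) := by push_cast; ring
          have h2 : (((j:ℕ)+1:ℕ):ℤ)-1 = ((j : ℕ) : ℤ) := by push_cast; ring
          rw [h1, h2, ih (k+1) (by omega) j]
          simp
      rw [h, hA, hB]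
      have e1 : (n+1) % 3 = (n % 3 + 1) % 3 := by omega
      have e2 : (k+2) % 3 = (k % 3 + 2) % 3 := by omega
      have e3 : (k+1) % 3 = (k % 3 + 1) % 3 := by omega
      rw [e1, e2, e3]
      by_cases h0 : n = 0
      · subst h0
        rcases (show k % 3 = 0 ∨ k % 3 = 1 ∨ k % 3 = 2 by omega) with hk | hk | hk <;>
          rw [hk] <;> norm_num [g3]
      · have e4 : (n-1) % 3 = (n % 3 + 2) % 3 := by omega
        rw [if_neg h0, e4]
        rcases (show k % 3 = 0 ∨ k % 3 = 1 ∨ k % 3 = 2 by omega) with hk | hk | hk <;>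
          rcases (show n % 3 = 0 ∨ n % 3 = 1 ∨ n % 3 = 2 by omega) with hn | hn | hn <;>
          rw [hk, hn] <;> norm_num [g3]

end aux

/-- The constant term of `p_{m,n}` is nonzero iff `m ≡ n (mod 3)` and `m ≢ 2 (mod 3)`;
it equals `1` if `m ≡ n ≡ 0 (mod 3)` and `-1` if `m ≡ n ≡ 1 (mod 3)`. -/
theorem stmt_2 (p : ℤ → ℤ → MvPolynomial (Fin 2) ℤ) (hp : IsSl3Cheb p) (m n : ℕ) :
    (constantCoeff (p (m : ℤ) (n : ℤ)) ≠ 0 ↔ (m % 3 = n % 3 ∧ m % 3 ≠ 2)) ∧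
    (m % 3 = 0 → n % 3 = 0 → constantCoeff (p (m : ℤ) (n : ℤ)) = 1) ∧
    (m % 3 = 1 → n % 3 = 1 → constantCoeff (p (m : ℤ) (n : ℤ)) = -1) := by
  rw [key hp m n]
  rcases (show m % 3 = 0 ∨ m % 3 = 1 ∨ m % 3 = 2 by omega) with hm | hm | hm <;>
    rcases (show n % 3 = 0 ∨ n % 3 = 1 ∨ n % 3 = 2 by omega) with hn | hn | hn <;>
    simp [g3, hm, hn]
end

section
/- Define Z(σ,τ) = exp(iσ) + exp(−iτ) + exp(i(−σ+τ)) for σ,τ ∈ ℝ. Then for all a,b ∈ ℕ with a+b = s ≥ 2, and all c,d ∈ ℕ, the function E⁻_{a,b}(σ,τ) = exp(i(aσ+bτ)) − exp(i((a+b)σ−bτ)) + exp(i(−(a+b)σ+aτ)) − exp(i(−bσ−aτ)) + exp(i(bσ−(a+b)τ)) − exp(i(−aσ+(a+b)τ)) vanishes at (σ,τ) = (2π(2c+d+3)/(3s), 2π(c+2d+3)/(3s)). -/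
open Real

/-- `Z(σ,τ) = exp(iσ) + exp(−iτ) + exp(i(−σ+τ))`. -/
noncomputable def Zfun (σ τ : ℝ) : ℂ :=
  Complex.exp (Complex.I * (σ : ℂ)) + Complex.exp (-(Complex.I * (τ : ℂ))) +
    Complex.exp (Complex.I * ((-σ + τ : ℝ) : ℂ))

/-- The antisymmetrized exponential sum `E⁻_{a,b}(σ,τ)`. -/
noncomputable def Eminus (a b : ℕ) (σ τ : ℝ) : ℂ :=
  Complex.exp (Complex.I * ((a * σ + b * τ : ℝ) : ℂ))
    - Complex.exp (Complex.I * (((a + b) * σ - b * τ : ℝ) : ℂ))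
    + Complex.exp (Complex.I * ((-((a + b) * σ) + a * τ : ℝ) : ℂ))
    - Complex.exp (Complex.I * ((-(b * σ) - a * τ : ℝ) : ℂ))
    + Complex.exp (Complex.I * ((b * σ - (a + b) * τ : ℝ) : ℂ))
    - Complex.exp (Complex.I * ((-(a * σ) + (a + b) * τ : ℝ) : ℂ))

lemma expI_eq (x y : ℝ) (n : ℤ) (hx : x = y + 2 * π * n) :
    Complex.exp (Complex.I * (x : ℂ)) = Complex.exp (Complex.I * (y : ℂ)) := by
  subst hx
  push_cast
  rw [mul_add, Complex.exp_add]
  have hI : Complex.I * (2 * (π : ℂ) * (n : ℂ)) = (n : ℤ) * (2 * (π : ℂ) * Complex.I) := by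
    ring
  rw [hI, Complex.exp_int_mul_two_pi_mul_I, mul_one]

/-- For `a, b ∈ ℕ` with `a + b = s ≥ 2` and all `c, d ∈ ℕ`, the function `E⁻_{a,b}`
vanishes at `(σ,τ) = (2π(2c+d+3)/(3s), 2π(c+2d+3)/(3s))`. -/
theorem stmt_4 (a b : ℕ) (h : 2 ≤ a + b) (c d : ℕ) :
    Eminus a b (2 * π * (2 * c + d + 3) / (3 * (a + b)))
      (2 * π * (c + 2 * d + 3) / (3 * (a + b))) = 0 := by
  have hs : ((a : ℝ) + b) ≠ 0 := by
    have h0 : 0 < a + b := by omega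
    have : (0 : ℝ) < (a : ℝ) + b := by exact_mod_cast h0
    linarith
  set σ : ℝ := 2 * π * (2 * c + d + 3) / (3 * (a + b)) with hσ
  set τ : ℝ := 2 * π * (c + 2 * d + 3) / (3 * (a + b)) with hτ
  have e1 : Complex.exp (Complex.I * ((a * σ + b * τ : ℝ) : ℂ)) =
      Complex.exp (Complex.I * ((-(b * σ) - a * τ : ℝ) : ℂ)) := by
    apply expI_eq _ _ ((c : ℤ) + d + 2)
    rw [hσ, hτ]
    push_cast
    field_simp
    ring
  have e2 : Complex.exp (Complex.I * (((a + b) * σ - b * τ : ℝ) : ℂ)) =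
      Complex.exp (Complex.I * ((-((a + b) * σ) + a * τ : ℝ) : ℂ)) := by
    apply expI_eq _ _ ((c : ℤ) + 1)
    rw [hσ, hτ]
    push_cast
    field_simp
    ring
  have e3 : Complex.exp (Complex.I * ((b * σ - (a + b) * τ : ℝ) : ℂ)) =
      Complex.exp (Complex.I * ((-(a * σ) + (a + b) * τ : ℝ) : ℂ)) := by
    apply expI_eq _ _ (-((d : ℤ) + 1))
    rw [hσ, hτ]
    push_cast
    field_simp
    ring
  unfold Eminus
  rw [e1, e2, e3]
  ring
end

section
/- The number of common complex roots of the family { p_{m,n} : m+n = e+1 } of sl_3 Chebyshev polynomials (i.e. the number of points in the vanishing set V_e ⊂ ℂ²) is exactly the triangular number t_e = (e+1)(e+2)/2. -/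
/-!
For `λ = aω₁ + bω₂` with `a + b ≤ e`, let `u, v, w` be `ζ` raised to the coordinates of
`3(λ + ρ)`, with `ζ` a primitive `3(e + 3)`-th root of unity. The `sl₃` recursion is solved at
`(X, Y) = (u + v + w, uv + uw + vw)` by the Weyl character formula, a quotient of alternants,
and the alternant in the numerator vanishes for `m + n = e + 1` because
`u ^ (e + 3) = v ^ (e + 3) = w ^ (e + 3)`. This gives `t_e` distinct points of `V_e`.

Conversely, since `p_{m,n}` vanishes on `V_e` for `m + n = e + 1`, the recursions show that on
a finite `S ⊆ V_e` the restrictions of the `p_{a,b}` with `a + b ≤ e` span a space stable under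
multiplication by `X` and `Y`; it contains all polynomial functions on `S`, hence, by
interpolation, all functions on `S`. So `|S| ≤ t_e`.
-/

open MvPolynomial

open Finset

/-- Off the quadrant only the lines `m = -1` and `n = -1` are constrained: the recursions read
nothing else, and the Weyl character formula vanishes there but not further out. -/
structure IsSl3ChebSeq {A : Type*} [CommRing A] (x y : A) (f : ℤ → ℤ → A) : Prop where
  apply_neg_one_left : ∀ n, f (-1) n = 0
  apply_neg_one_right : ∀ m, f m (-1) = 0
  apply_zero_zero : f 0 0 = 1
  mul_left : ∀ m n, 0 ≤ m → 0 ≤ n →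
    x * f m n = f (m + 1) n + f (m - 1) (n + 1) + f m (n - 1)
  mul_right : ∀ m n, 0 ≤ m → 0 ≤ n →
    y * f m n = f m (n + 1) + f (m + 1) (n - 1) + f (m - 1) n

namespace IsSl3ChebSeq

variable {A : Type*} [CommRing A] {x y : A} {f g : ℤ → ℤ → A}

theorem apply_eq (hf : IsSl3ChebSeq x y f) (hg : IsSl3ChebSeq x y g) {m n : ℤ} (hm : 0 ≤ m)
    (hn : 0 ≤ n) : f m n = g m n := by
  suffices h : ∀ d : ℕ, ∀ m n : ℤ, -1 ≤ m → -1 ≤ n → m + n + 2 ≤ d → f m n = g m n from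
    h _ m n (by omega) (by omega) (Int.self_le_toNat _)
  intro d
  induction d with
  | zero =>
    intro m n hm _ hd
    obtain rfl : m = -1 := by omega
    rw [hf.apply_neg_one_left, hg.apply_neg_one_left]
  | succ d ih =>
    intro m n hm hn hd
    obtain rfl | hm := hm.eq_or_lt
    · rw [hf.apply_neg_one_left, hg.apply_neg_one_left]
    obtain rfl | hn := hn.eq_or_lt
    · rw [hf.apply_neg_one_right, hg.apply_neg_one_right]
    obtain rfl | hm := (show 0 ≤ m by omega).eq_or_lt
    · obtain rfl | hn := (show 0 ≤ n by omega).eq_or_lt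
      · rw [hf.apply_zero_zero, hg.apply_zero_zero]
      have hfy := hf.mul_right 0 (n - 1) le_rfl (by omega)
      have hgy := hg.mul_right 0 (n - 1) le_rfl (by omega)
      rw [sub_add_cancel] at hfy hgy
      rw [ih 0 (n - 1) (by omega) (by omega) (by omega),
        ih (0 + 1) (n - 1 - 1) (by omega) (by omega) (by omega),
        ih (0 - 1) (n - 1) (by omega) (by omega) (by omega)] at hfy
      linear_combination hgy - hfy
    · have hfx := hf.mul_left (m - 1) n (by omega) (by omega)
      have hgx := hg.mul_left (m - 1) n (by omega) (by omega)
      rw [sub_add_cancel] at hfx hgx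
      rw [ih (m - 1) n (by omega) (by omega) (by omega),
        ih (m - 1 - 1) (n + 1) (by omega) (by omega) (by omega),
        ih (m - 1) (n - 1) (by omega) (by omega) (by omega)] at hfx
      linear_combination hgx - hfx

end IsSl3ChebSeq

theorem IsSl3Cheb.isSl3ChebSeq_aeval {p : ℤ → ℤ → MvPolynomial (Fin 2) ℤ} (hp : IsSl3Cheb p)
    {A : Type*} [CommRing A] (v : Fin 2 → A) :
    IsSl3ChebSeq (v 0) (v 1) fun m n => aeval v (p m n) := by
  obtain ⟨hneg, h00, -, -, hX, hY⟩ := hp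
  refine ⟨fun n => ?_, fun m => ?_, by simp [h00], fun m n hm hn => ?_, fun m n hm hn => ?_⟩
  · simp [hneg (-1) n (by omega)]
  · simp [hneg m (-1) (by omega)]
  · simpa using congrArg (aeval v) (hX m n hm hn)
  · simpa using congrArg (aeval v) (hY m n hm hn)

def triangle (e : ℕ) : Finset (ℕ × ℕ) := (range (e + 1)).biUnion antidiagonal

theorem mem_triangle {e : ℕ} {ab : ℕ × ℕ} : ab ∈ triangle e ↔ ab.1 + ab.2 ≤ e := by
  simp [triangle]

theorem card_triangle (e : ℕ) : (triangle e).card = (e + 1) * (e + 2) / 2 := by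
  rw [triangle, card_biUnion fun d _ d' _ hne => disjoint_left.2 fun _ h h' =>
    hne ((mem_antidiagonal.1 h).symm.trans (mem_antidiagonal.1 h'))]
  simp only [Nat.card_antidiagonal]
  rw [← add_zero (∑ d ∈ range (e + 1), (d + 1)), ← sum_range_succ' (fun i => i), sum_range_id,
    Nat.add_sub_cancel, mul_comm]

theorem MvPolynomial.aeval_pi_apply {R A ι σ : Type*} [CommSemiring R] [CommSemiring A]
    [Algebra R A] (v : σ → ι → A) (q : MvPolynomial σ R) (z : ι) :
    aeval v q z = aeval (fun i => v i z) q :=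
  DFunLike.congr_fun (comp_aeval v (Pi.evalAlgHom R (fun _ => A) z)) q

theorem MvPolynomial.aeval_mem_of_forall_mul_mem {R A σ : Type*} [CommSemiring R]
    [CommSemiring A] [Algebra R A] {v : σ → A} {W : Submodule R A} (h1 : 1 ∈ W)
    (hmul : ∀ i, ∀ w ∈ W, v i * w ∈ W) (q : MvPolynomial σ R) : aeval v q ∈ W := by
  induction q using MvPolynomial.induction_on with
  | C c => rw [aeval_C, Algebra.algebraMap_eq_smul_one]; exact W.smul_mem c h1
  | add f g hf hg => rw [map_add]; exact W.add_mem hf hg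
  | mul_X f i hf => rw [map_mul, aeval_X, mul_comm]; exact hmul i _ hf

theorem MvPolynomial.surjective_aeval_finset {K σ : Type*} [Field K] (S : Finset (σ → K)) :
    Function.Surjective
      (aeval fun i (z : S) => (z : σ → K) i : MvPolynomial σ K →ₐ[K] S → K) := by
  classical
  have hsep : ∀ z₀ z₁ : σ → K, ∃ q : MvPolynomial σ K,
      eval z₀ q = 1 ∧ (z₁ ≠ z₀ → eval z₁ q = 0) := by
    intro z₀ z₁
    by_cases h : z₁ = z₀
    · exact ⟨1, map_one _, fun h' => (h' h).elim⟩
    obtain ⟨i, hi⟩ := Function.ne_iff.1 h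
    exact ⟨C (z₀ i - z₁ i)⁻¹ * (X i - C (z₁ i)), by simp [sub_ne_zero.2 (Ne.symm hi)],
      fun _ => by simp⟩
  choose sep hsep₀ hsep₁ using hsep
  set ev : MvPolynomial σ K →ₐ[K] S → K := aeval fun i z => (z : σ → K) i
  refine (LinearMap.range_eq_top (f := ev.toLinearMap)).1 (eq_top_iff.2 ?_)
  rw [← (Pi.basisFun K S).span_eq, Submodule.span_le]
  rintro _ ⟨z₀, rfl⟩
  refine ⟨∏ z₁ ∈ univ.erase z₀, sep z₀ z₁, ?_⟩
  ext z
  rw [AlgHom.toLinearMap_apply, aeval_pi_apply, map_prod, Pi.basisFun_apply]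
  by_cases hz : z = z₀
  · subst hz
    rw [Pi.single_eq_same]
    exact prod_eq_one fun z₁ _ => hsep₀ _ _
  · rw [Pi.single_eq_of_ne hz]
    exact prod_eq_zero (mem_erase.2 ⟨hz, mem_univ z⟩)
      (hsep₁ _ _ fun h => hz (Subtype.ext h))

theorem IsSl3ChebSeq.aeval_mem_span {R A : Type*} [CommRing R] [CommRing A] [Algebra R A]
    {v : Fin 2 → A} {f : ℤ → ℤ → A} (hf : IsSl3ChebSeq (v 0) (v 1) f) {e : ℕ}
    (hzero : ∀ m n : ℕ, m + n = e + 1 → f m n = 0) (q : MvPolynomial (Fin 2) R) :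
    aeval v q ∈ Submodule.span R (Set.range fun ab : triangle e => f ab.1.1 ab.1.2) := by
  set W := Submodule.span R (Set.range fun ab : triangle e => f ab.1.1 ab.1.2)
  have hmem : ∀ m n : ℤ, -1 ≤ m → -1 ≤ n → m + n ≤ e + 1 → f m n ∈ W := by
    intro m n hm hn hmn
    obtain rfl | hm := hm.eq_or_lt
    · rw [hf.apply_neg_one_left]; exact W.zero_mem
    obtain rfl | hn := hn.eq_or_lt
    · rw [hf.apply_neg_one_right]; exact W.zero_mem
    lift m to ℕ using by omega
    lift n to ℕ using by omega
    obtain hmn | hmn := hmn.lt_or_eq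
    · exact Submodule.subset_span ⟨⟨(m, n), mem_triangle.2 (by omega)⟩, rfl⟩
    · rw [hzero m n (by omega)]; exact W.zero_mem
  have hmul : ∀ i, ∀ w ∈ W, v i * w ∈ W := by
    intro i w hw
    have hle : W.map (LinearMap.mulLeft R (v i)) ≤ W := by
      rw [Submodule.map_span_le]
      rintro _ ⟨⟨⟨a, b⟩, hab⟩, rfl⟩
      rw [mem_triangle] at hab
      fin_cases i
      · show v 0 * f a b ∈ W
        rw [hf.mul_left a b (by omega) (by omega)]
        exact add_mem (add_mem (hmem _ _ (by omega) (by omega) (by omega))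
          (hmem _ _ (by omega) (by omega) (by omega))) (hmem _ _ (by omega) (by omega) (by omega))
      · show v 1 * f a b ∈ W
        rw [hf.mul_right a b (by omega) (by omega)]
        exact add_mem (add_mem (hmem _ _ (by omega) (by omega) (by omega))
          (hmem _ _ (by omega) (by omega) (by omega))) (hmem _ _ (by omega) (by omega) (by omega))
    exact hle (Submodule.mem_map_of_mem hw)
  have h1 : (1 : A) ∈ W := hf.apply_zero_zero ▸ hmem 0 0 (by norm_num) (by norm_num) (by omega)
  exact aeval_mem_of_forall_mul_mem h1 hmul q

theorem card_le_of_forall_aeval_eq_zero {K : Type*} [Field K]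
    {p : ℤ → ℤ → MvPolynomial (Fin 2) ℤ} (hp : IsSl3Cheb p) {e : ℕ} (S : Finset (Fin 2 → K))
    (hS : ∀ v ∈ S, ∀ m n : ℕ, m + n = e + 1 → aeval v (p m n) = 0) :
    S.card ≤ (e + 1) * (e + 2) / 2 := by
  set x : Fin 2 → S → K := fun i z => (z : Fin 2 → K) i
  have hf := hp.isSl3ChebSeq_aeval x
  set W := Submodule.span K (Set.range fun ab : triangle e => aeval x (p ab.1.1 ab.1.2))
  have hW : W = ⊤ := by
    refine eq_top_iff.2 fun g _ => ?_
    obtain ⟨q, rfl⟩ := surjective_aeval_finset S g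
    refine hf.aeval_mem_span (fun m n hmn => funext fun z => ?_) q
    exact (aeval_pi_apply x (p m n) z).trans (hS z z.2 m n hmn)
  calc S.card = Module.finrank K (S → K) := by simp
    _ = Module.finrank K W := by rw [hW, finrank_top]
    _ ≤ Fintype.card (triangle e) := finrank_range_le_card _
    _ = (e + 1) * (e + 2) / 2 := by rw [Fintype.card_coe, card_triangle]

section Alternant

variable {K : Type*} [Field K] {u v w : K}

/-- The alternant `det (x ^ r, x ^ s, 1)` over the rows `x ∈ {u, v, w}`; for `uvw = 1`,
`alternant u v w (m + n + 2) (n + 1) / alternant u v w 2 1` is the Weyl character of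
`mω₁ + nω₂`. -/
def alternant (u v w : K) (r s : ℤ) : K :=
  u ^ r * v ^ s - u ^ r * w ^ s + v ^ r * w ^ s - v ^ r * u ^ s + w ^ r * u ^ s - w ^ r * v ^ s

theorem alternant_self (r : ℤ) : alternant u v w r r = 0 := by
  unfold alternant; ring

theorem alternant_zero_right (r : ℤ) : alternant u v w r 0 = 0 := by
  simp [alternant]

theorem alternant_two_one : alternant u v w 2 1 = (u - v) * (u - w) * (v - w) := by
  simp only [alternant, zpow_one, zpow_two]
  ring

theorem alternant_eq_zero_of_zpow_eq {N : ℤ} (huv : u ^ N = v ^ N) (hvw : v ^ N = w ^ N) (s : ℤ) :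
    alternant u v w N s = 0 := by
  rw [alternant, huv, hvw]; ring

theorem esymm₁_mul_alternant (huvw : u * v * w = 1) (r s : ℤ) :
    (u + v + w) * alternant u v w r s =
      alternant u v w (r + 1) s + alternant u v w r (s + 1) + alternant u v w (r - 1) (s - 1) := by
  have hu : u ≠ 0 := left_ne_zero_of_mul (left_ne_zero_of_mul_eq_one huvw)
  have hv : v ≠ 0 := right_ne_zero_of_mul (left_ne_zero_of_mul_eq_one huvw)
  have hw : w ≠ 0 := right_ne_zero_of_mul_eq_one huvw
  have hu' : u⁻¹ = v * w := inv_eq_of_mul_eq_one_right (by linear_combination huvw)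
  have hv' : v⁻¹ = u * w := inv_eq_of_mul_eq_one_right (by linear_combination huvw)
  have hw' : w⁻¹ = u * v := inv_eq_of_mul_eq_one_right (by linear_combination huvw)
  simp only [alternant, zpow_add_one₀ hu, zpow_add_one₀ hv, zpow_add_one₀ hw,
    zpow_sub_one₀ hu, zpow_sub_one₀ hv, zpow_sub_one₀ hw, hu', hv', hw']
  linear_combination (u * w ^ r * v ^ s - w * u ^ r * v ^ s + v * u ^ r * w ^ s
    - u * v ^ r * w ^ s + w * v ^ r * u ^ s - v * w ^ r * u ^ s) * huvw

theorem esymm₂_mul_alternant (huvw : u * v * w = 1) (r s : ℤ) :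
    (u * v + u * w + v * w) * alternant u v w r s =
      alternant u v w (r + 1) (s + 1) + alternant u v w r (s - 1) + alternant u v w (r - 1) s := by
  have hu : u ≠ 0 := left_ne_zero_of_mul (left_ne_zero_of_mul_eq_one huvw)
  have hv : v ≠ 0 := right_ne_zero_of_mul (left_ne_zero_of_mul_eq_one huvw)
  have hw : w ≠ 0 := right_ne_zero_of_mul_eq_one huvw
  have hu' : u⁻¹ = v * w := inv_eq_of_mul_eq_one_right (by linear_combination huvw)
  have hv' : v⁻¹ = u * w := inv_eq_of_mul_eq_one_right (by linear_combination huvw)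
  have hw' : w⁻¹ = u * v := inv_eq_of_mul_eq_one_right (by linear_combination huvw)
  simp only [alternant, zpow_add_one₀ hu, zpow_add_one₀ hv, zpow_add_one₀ hw,
    zpow_sub_one₀ hu, zpow_sub_one₀ hv, zpow_sub_one₀ hw, hu', hv', hw']
  ring

theorem isSl3ChebSeq_alternant_div (huvw : u * v * w = 1) (huv : u ≠ v) (huw : u ≠ w)
    (hvw : v ≠ w) :
    IsSl3ChebSeq (u + v + w) (u * v + u * w + v * w)
      fun m n => alternant u v w (m + n + 2) (n + 1) / alternant u v w 2 1 := by
  have hD : alternant u v w 2 1 ≠ 0 := by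
    rw [alternant_two_one]
    exact mul_ne_zero (mul_ne_zero (sub_ne_zero.2 huv) (sub_ne_zero.2 huw)) (sub_ne_zero.2 hvw)
  refine ⟨fun n => ?_, fun m => ?_, div_self (by simpa using hD), fun m n _ _ => ?_,
    fun m n _ _ => ?_⟩
  · rw [show -1 + n + 2 = n + 1 by ring, alternant_self, zero_div]
  · rw [show (-1 : ℤ) + 1 = 0 by ring, alternant_zero_right, zero_div]
  · rw [← mul_div_assoc, esymm₁_mul_alternant huvw, ← add_div, ← add_div]
    ring_nf
  · rw [← mul_div_assoc, esymm₂_mul_alternant huvw, ← add_div, ← add_div]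
    ring_nf

end Alternant

section WeylPoints

variable {K : Type*} [Field K]

def elemSymmPoint (u v w : K) : Fin 2 → K := ![u + v + w, u * v + u * w + v * w]

theorem aeval_elemSymmPoint {p : ℤ → ℤ → MvPolynomial (Fin 2) ℤ} (hp : IsSl3Cheb p)
    {u v w : K} (huvw : u * v * w = 1) (huv : u ≠ v) (huw : u ≠ w) (hvw : v ≠ w) {m n : ℤ}
    (hm : 0 ≤ m) (hn : 0 ≤ n) :
    aeval (elemSymmPoint u v w) (p m n) =
      alternant u v w (m + n + 2) (n + 1) / alternant u v w 2 1 :=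
  (hp.isSl3ChebSeq_aeval (elemSymmPoint u v w)).apply_eq
    (isSl3ChebSeq_alternant_div huvw huv huw hvw) hm hn

theorem mem_of_elemSymmPoint_eq {u v w u' v' w' t : K}
    (h : elemSymmPoint u v w = elemSymmPoint u' v' w') (hprod : u * v * w = u' * v' * w')
    (ht : t = u' ∨ t = v' ∨ t = w') : t = u ∨ t = v ∨ t = w := by
  have h₁ : u + v + w = u' + v' + w' := congrFun h 0
  have h₂ : u * v + u * w + v * w = u' * v' + u' * w' + v' * w' := congrFun h 1
  have hroot : (t - u) * (t - v) * (t - w) = 0 := by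
    have : (t - u') * (t - v') * (t - w') = 0 := by rcases ht with rfl | rfl | rfl <;> ring
    linear_combination this - t ^ 2 * h₁ + t * h₂ - hprod
  simpa only [mul_eq_zero, sub_eq_zero, or_assoc] using hroot

theorem IsPrimitiveRoot.zpow_eq_zpow_iff_dvd {ζ : K} {k : ℕ} (hζ : IsPrimitiveRoot ζ k)
    (hk : k ≠ 0) (s t : ℤ) : ζ ^ s = ζ ^ t ↔ (k : ℤ) ∣ s - t := by
  have hζ₀ : ζ ≠ 0 := hζ.ne_zero hk
  rw [← hζ.zpow_eq_one_iff_dvd, zpow_sub₀ hζ₀, div_eq_one_iff_eq (zpow_ne_zero _ hζ₀)]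

theorem IsPrimitiveRoot.sub_eq_of_zpow_eq {ζ : K} {k : ℕ} (hζ : IsPrimitiveRoot ζ k) (hk : k ≠ 0)
    {s t : ℤ} (h : ζ ^ s = ζ ^ t) (hlt : s - t < 2 * k) (hgt : -(2 * k) < s - t) :
    s - t = 0 ∨ s - t = k ∨ s - t = -k := by
  obtain ⟨c, hc⟩ := (hζ.zpow_eq_zpow_iff_dvd hk s t).1 h
  have hk' : (0 : ℤ) < k := by omega
  have hc₁ : c < 2 := by nlinarith
  have hc₂ : -2 < c := by nlinarith
  obtain rfl | rfl | rfl : c = 0 ∨ c = 1 ∨ c = -1 := by omega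
  all_goals simp_all

theorem IsPrimitiveRoot.zpow_ne_zpow {ζ : K} {k : ℕ} (hζ : IsPrimitiveRoot ζ k) {s t : ℤ}
    (hpos : 0 < s - t) (hlt : s - t < k) : ζ ^ s ≠ ζ ^ t := by
  rw [Ne, hζ.zpow_eq_zpow_iff_dvd (by omega)]
  exact fun hdvd => (Int.le_of_dvd hpos hdvd).not_gt hlt

/-- The exponents are `3εᵢ(λ + ρ)` for `λ = aω₁ + bω₂` and `ρ` the Weyl vector. -/
def weylPoint (ζ : K) (a b : ℕ) : Fin 2 → K :=
  elemSymmPoint (ζ ^ (2 * a + b + 3 : ℤ)) (ζ ^ ((b : ℤ) - a)) (ζ ^ (-(a + 2 * b + 3 : ℤ)))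

variable {ζ : K} {e : ℕ}

theorem zpow_mul_zpow_mul_zpow_eq_one (hζ : ζ ≠ 0) (a b : ℕ) :
    ζ ^ (2 * a + b + 3 : ℤ) * ζ ^ ((b : ℤ) - a) * ζ ^ (-(a + 2 * b + 3 : ℤ)) = 1 := by
  rw [← zpow_add₀ hζ, ← zpow_add₀ hζ]
  ring_nf
  exact zpow_zero ζ

theorem aeval_weylPoint_eq_zero (hζ : IsPrimitiveRoot ζ (3 * (e + 3))) {a b : ℕ}
    (hab : a + b ≤ e) {p : ℤ → ℤ → MvPolynomial (Fin 2) ℤ} (hp : IsSl3Cheb p) {m n : ℕ}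
    (hmn : m + n = e + 1) : aeval (weylPoint ζ a b) (p m n) = 0 := by
  rw [weylPoint,
    aeval_elemSymmPoint hp (zpow_mul_zpow_mul_zpow_eq_one (hζ.ne_zero (by omega)) a b)
    (hζ.zpow_ne_zpow (by omega) (by push_cast; omega))
    (hζ.zpow_ne_zpow (by omega) (by push_cast; omega))
    (hζ.zpow_ne_zpow (by omega) (by push_cast; omega)) (by omega) (by omega),
    show (m : ℤ) + n + 2 = e + 3 by omega, alternant_eq_zero_of_zpow_eq, zero_div]
  all_goals
    rw [← zpow_mul, ← zpow_mul, hζ.zpow_eq_zpow_iff_dvd (by omega)]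
  exacts [⟨a + 1, by push_cast; ring⟩, ⟨b + 1, by push_cast; ring⟩]

theorem weylPoint_injOn (hζ : IsPrimitiveRoot ζ (3 * (e + 3))) :
    Set.InjOn (fun ab : ℕ × ℕ => weylPoint ζ ab.1 ab.2) {ab | ab.1 + ab.2 ≤ e} := by
  rintro ⟨a, b⟩ (hab : a + b ≤ e) ⟨a', b'⟩ (hab' : a' + b' ≤ e) h
  have hζ₀ : ζ ≠ 0 := hζ.ne_zero (by omega)
  have hmem := fun t => mem_of_elemSymmPoint_eq (t := t) h
    ((zpow_mul_zpow_mul_zpow_eq_one hζ₀ a b).trans (zpow_mul_zpow_mul_zpow_eq_one hζ₀ a' b').symm)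
  have hdiff : ∀ s t : ℤ, ζ ^ s = ζ ^ t → -(2 * e + 3 : ℤ) ≤ s → s ≤ 2 * e + 3 →
      -(2 * e + 3 : ℤ) ≤ t → t ≤ 2 * e + 3 →
      s - t = 0 ∨ s - t = 3 * (e + 3) ∨ s - t = -(3 * (e + 3)) := fun s t hst _ _ _ _ => by
    simpa using hζ.sub_eq_of_zpow_eq (by omega) hst (by push_cast; omega) (by push_cast; omega)
  -- match the roots in all 27 ways; all but the identity contradict the exponent bounds
  obtain h₁ | h₁ | h₁ := hmem _ (Or.inl rfl) <;>
  obtain h₂ | h₂ | h₂ := hmem _ (Or.inr (Or.inl rfl)) <;>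
  obtain h₃ | h₃ | h₃ := hmem _ (Or.inr (Or.inr rfl)) <;>
  · have := hdiff _ _ h₁ (by omega) (by omega) (by omega) (by omega)
    have := hdiff _ _ h₂ (by omega) (by omega) (by omega) (by omega)
    have := hdiff _ _ h₃ (by omega) (by omega) (by omega) (by omega)
    ext <;> omega

end WeylPoints

theorem Set.ncard_eq_of_forall_card_le {α : Type*} {s : Set α} {N : ℕ}
    (hle : ∀ t : Finset α, ↑t ⊆ s → t.card ≤ N) (hge : ∃ t : Finset α, ↑t ⊆ s ∧ t.card = N) :
    s.ncard = N := by
  obtain ⟨t, hts, rfl⟩ := hge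
  have hfin : s.Finite := by
    by_contra hinf
    obtain ⟨u, hus, hu⟩ := Set.Infinite.exists_subset_card_eq hinf (t.card + 1)
    have := hle u hus
    omega
  refine le_antisymm ?_ ?_
  · rw [Set.ncard_eq_toFinset_card s hfin]
    exact hle _ (by simp)
  · rw [← Set.ncard_coe_finset]
    exact Set.ncard_le_ncard hts hfin

/-- The vanishing set `V_e ⊂ ℂ²` of common zeros of the `sl₃` Chebyshev polynomials
`p_{m,n}` with `m + n = e + 1` has exactly `t_e = (e+1)(e+2)/2` points. -/
theorem stmt_5 (e : ℕ) (p : ℤ → ℤ → MvPolynomial (Fin 2) ℤ) (hp : IsSl3Cheb p) :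
    {z : ℂ × ℂ | ∀ m n : ℕ, m + n = e + 1 →
      MvPolynomial.aeval ![z.1, z.2] (p (m : ℤ) (n : ℤ)) = 0}.ncard =
      (e + 1) * (e + 2) / 2 := by
  classical
  set V := {v : Fin 2 → ℂ | ∀ m n : ℕ, m + n = e + 1 → aeval v (p m n) = 0}
  have hinj : Function.Injective fun z : ℂ × ℂ => ![z.1, z.2] := fun z w h =>
    Prod.ext (congrFun h 0) (congrFun h 1)
  have hrange : V ⊆ Set.range fun z : ℂ × ℂ => ![z.1, z.2] := fun v _ =>
    ⟨(v 0, v 1), by ext i; fin_cases i <;> rfl⟩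
  change ((fun z : ℂ × ℂ => ![z.1, z.2]) ⁻¹' V).ncard = _
  rw [Set.ncard_preimage_of_injective_subset_range hinj hrange]
  refine Set.ncard_eq_of_forall_card_le (fun S hS => card_le_of_forall_aeval_eq_zero hp S hS) ?_
  obtain ⟨ζ, hζ⟩ : ∃ ζ : ℂ, IsPrimitiveRoot ζ (3 * (e + 3)) :=
    ⟨_, Complex.isPrimitiveRoot_exp _ (by omega)⟩
  refine ⟨(triangle e).image fun ab => weylPoint ζ ab.1 ab.2, ?_, ?_⟩
  · simp only [coe_image, Set.image_subset_iff]
    exact fun ab hab m n hmn => aeval_weylPoint_eq_zero hζ (mem_triangle.1 hab) hp hmn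
  · rw [card_image_of_injOn ((weylPoint_injOn hζ).mono fun ab => mem_triangle.1), card_triangle]
end

section
/- In the affine type A_2 Hecke algebra H (with generators and relations as above), the elements θ_{w_g}, θ_{w_o}, θ_{w_p} satisfy θ_{w_g} θ_{w_o} θ_{w_g} = θ_{w_g} θ_{w_p} θ_{w_g}. -/
set_option synthInstance.maxHeartbeats 1000000
set_option maxHeartbeats 1000000

/-- The quantum number `[n] = (v^n - v^{-n})/(v - v^{-1})` in `ℂ(v)`. -/
noncomputable def qn (n : ℤ) : RatFunc ℂ :=
  (RatFunc.X ^ n - RatFunc.X ^ (-n)) / (RatFunc.X - RatFunc.X⁻¹)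

/-!
Write `g = θ_bθ_yθ_b − θ_b`. Since `θ_b² = [2]θ_b`, the element `g` absorbs `θ_b` on either side
with factor `[2]`; since `g = θ_yθ_bθ_y − θ_y` and `θ_y² = [2]θ_y`, it absorbs `θ_y` likewise. For
any `x` absorbed by `g` in this way, `g (x r x − x) g = [2]² g r g − [2] g²` no longer depends on `x`.
Taking `x = θ_b` gives the right-hand side, and `x = θ_y` gives the left-hand side after rewriting
`θ_rθ_yθ_r − θ_r = θ_yθ_rθ_y − θ_y`.
-/

section Sandwich

variable {R A : Type*} [CommSemiring R] [Ring A] [Algebra R A]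

theorem sandwich_sub_mul_of_sq_eq_smul {x : A} {c : R} (hx : x ^ 2 = c • x) (s : A) :
    (x * s * x - x) * x = c • (x * s * x - x) := by
  calc (x * s * x - x) * x = x * s * x ^ 2 - x ^ 2 := by noncomm_ring
    _ = c • (x * s * x - x) := by rw [hx, mul_smul_comm, smul_sub]

theorem mul_sandwich_sub_of_sq_eq_smul {x : A} {c : R} (hx : x ^ 2 = c • x) (s : A) :
    x * (x * s * x - x) = c • (x * s * x - x) := by
  calc x * (x * s * x - x) = x ^ 2 * s * x - x ^ 2 := by noncomm_ring
    _ = c • (x * s * x - x) := by rw [hx, smul_mul_assoc, smul_mul_assoc, smul_sub]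

theorem mul_sandwich_sub_mul_of_absorbs {g x : A} {c : R} (hgx : g * x = c • g)
    (hxg : x * g = c • g) (r : A) :
    g * (x * r * x - x) * g = c ^ 2 • (g * r * g) - c • (g * g) := by
  calc g * (x * r * x - x) * g = (g * x) * r * (x * g) - (g * x) * g := by noncomm_ring
    _ = c ^ 2 • (g * r * g) - c • (g * g) := by
      rw [hgx, hxg, smul_mul_assoc, smul_mul_assoc, mul_smul_comm, smul_smul, ← sq,
        smul_mul_assoc]

end Sandwich

theorem stmt_10_general (A : Type) [Ring A] [Algebra (RatFunc ℂ) A] (θb θr θy : A)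
    (hb : θb ^ 2 = qn 2 • θb) (hy : θy ^ 2 = qn 2 • θy)
    (hby : θb * θy * θb - θb = θy * θb * θy - θy)
    (hry : θr * θy * θr - θr = θy * θr * θy - θy) :
    (θb * θy * θb - θb) * (θr * θy * θr - θr) * (θb * θy * θb - θb) =
      (θb * θy * θb - θb) * (θb * θr * θb - θb) * (θb * θy * θb - θb) := by
  set g := θb * θy * θb - θb
  have hgy : g * θy = qn 2 • g := by rw [hby]; exact sandwich_sub_mul_of_sq_eq_smul hy θb
  have hyg : θy * g = qn 2 • g := by rw [hby]; exact mul_sandwich_sub_of_sq_eq_smul hy θb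
  have hgb : g * θb = qn 2 • g := sandwich_sub_mul_of_sq_eq_smul hb θy
  have hbg : θb * g = qn 2 • g := mul_sandwich_sub_of_sq_eq_smul hb θy
  rw [hry, mul_sandwich_sub_mul_of_absorbs hgy hyg, mul_sandwich_sub_mul_of_absorbs hgb hbg]

/-- In the affine type `A₂` Hecke algebra (generators `θ_b, θ_r, θ_y` with
`θ_c² = [2]θ_c` and the cubic relations), the elements `θ_{w_g} = θ_bθ_yθ_b − θ_b`,
`θ_{w_o} = θ_rθ_yθ_r − θ_r`, `θ_{w_p} = θ_bθ_rθ_b − θ_b` satisfy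
`θ_{w_g} θ_{w_o} θ_{w_g} = θ_{w_g} θ_{w_p} θ_{w_g}`. -/
theorem stmt_10 (A : Type) [Ring A] [Algebra (RatFunc ℂ) A] (θb θr θy : A)
    (hb : θb ^ 2 = qn 2 • θb) (hr : θr ^ 2 = qn 2 • θr) (hy : θy ^ 2 = qn 2 • θy)
    (hby : θb * θy * θb - θb = θy * θb * θy - θy)
    (hry : θr * θy * θr - θr = θy * θr * θy - θy)
    (hbr : θb * θr * θb - θb = θr * θb * θr - θr) :
    (θb * θy * θb - θb) * (θr * θy * θr - θr) * (θb * θy * θb - θb) =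
      (θb * θy * θb - θb) * (θb * θr * θb - θb) * (θb * θy * θb - θb) :=
  stmt_10_general A θb θr θy hb hy hby hry
end
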